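/- arXiv:math/0205306 — 6 statements merged into one kernel-verified Lean document; each statement's English description precedes it below -/
import Mathlib

section
/- (Proposition 2.24, eq. (2.32): det_∞(s/(2π) − Φ_2/(2π)) = Γ_ℂ(s−1)^{-b_2}.) For every positive integer b and every real number s with 0 < s < 1, one has Complex.exp( − deriv (fun z : ℂ => (b : ℂ) * (2*π)^z * ( ζ_H(s, z) + ((s : ℂ) − 1)^(−z) )) 0 ) = ( (2*π)^((s : ℂ) − 1) / Γ((s : ℂ) − 1) )^b, where ((s : ℂ) − 1)^(−z) is the principal-branch complex power (Complex.cpow) of the nonzero complex number s − 1 ∈ (−1, 0). (Here Φ_2 has spectrum {n ∈ ℤ : n ≤ 1}, each eigenvalue of multiplicity b, and the right-hand side equals Γ_ℂ(s−1)^{-b}.) -/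
/-!
The heart of the matter is Lerch's formula `∂_z ζ_H(a, 0) = log Γ(a) - log (2π) / 2`, together
with `ζ_H(a, 0) = 1/2 - a`, for `0 < a ≤ 1`. For `Re z > 1`, comparing Dirichlet series gives
`ζ_H(a, z) - ζ(z) = a^(-z) - a z ζ(z + 1) + Σ_{k ≥ 1} ((k + a)^(-z) - k^(-z) + z a k^(-z-1))`.
The summands are remainders of first-order Taylor expansions of `x ↦ x^(-z)`, of size
`O(k^(-Re z - 2))`, so the series is holomorphic for `Re z > -1/2`; as `ζ_H(a, ·) - ζ` is entire
and `z ζ(z + 1)` extends to an entire function, the identity persists near `0`. There the series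
vanishes, and its derivative `Σ (log k - log (k + a) + a / k)` is the logarithm of the
Weierstrass product of `Γ`, namely `log Γ(a) + log a + a γ`; with `ζ'(0) = -log (2π) / 2` this
is Lerch's formula. The determinant is then `((2π)^(-F(0)) exp(-F'(0)))^b` for
`F(z) = ζ_H(s, z) + (s - 1)^(-z)`, and `Γ(s) = (s - 1) Γ(s - 1)` brings it to the stated form.
-/

open HurwitzZeta Complex

open Filter Set Topology

local notation "γ" => Real.eulerMascheroniConstant

lemma norm_sub_sub_smul_le_of_norm_deriv2_le {E : Type*} [NormedAddCommGroup E]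
    [NormedSpace ℝ E] {f f' f'' : ℝ → E} {a C : ℝ} (ha : 0 ≤ a)
    (hf : ∀ t ∈ Icc 0 a, HasDerivAt f (f' t) t) (hf' : ∀ t ∈ Icc 0 a, HasDerivAt f' (f'' t) t)
    (hC : ∀ t ∈ Icc 0 a, ‖f'' t‖ ≤ C) :
    ‖f a - f 0 - a • f' 0‖ ≤ C * a ^ 2 := by
  have hC0 : 0 ≤ C := (norm_nonneg _).trans (hC 0 ⟨le_rfl, ha⟩)
  have hf'_lip : ∀ t ∈ Icc 0 a, ‖f' t - f' 0‖ ≤ C * (t - 0) :=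
    norm_image_sub_le_of_norm_deriv_le_segment' (fun t ht => (hf' t ht).hasDerivWithinAt)
      fun t ht => hC t (Ico_subset_Icc_self ht)
  have hψ : ∀ t ∈ Icc 0 a,
      HasDerivWithinAt (fun t => f t - t • f' 0) (f' t - f' 0) (Icc 0 a) t := fun t ht => by
    simpa using ((hf t ht).fun_sub ((hasDerivAt_id t).smul_const (f' 0))).hasDerivWithinAt
  have hψ' : ∀ t ∈ Ico 0 a, ‖f' t - f' 0‖ ≤ C * a := fun t ht =>
    (hf'_lip t (Ico_subset_Icc_self ht)).trans
      (mul_le_mul_of_nonneg_left (by linarith [ht.2]) hC0)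
  have := norm_image_sub_le_of_norm_deriv_le_segment' hψ hψ' a ⟨ha, le_rfl⟩
  simpa [sq, mul_assoc, sub_right_comm] using this

lemma hasDerivAt_ofReal_cpow_const_of_pos {x : ℝ} (hx : 0 < x) (w : ℂ) :
    HasDerivAt (fun t : ℝ => (t : ℂ) ^ w) (w * (x : ℂ) ^ (w - 1)) x := by
  simpa using ((hasDerivAt_id (x : ℂ)).cpow_const (ofReal_mem_slitPlane.2 hx)).comp_ofReal

lemma sum_range_log_sub_log_add_div (a : ℝ) (N : ℕ) :
    ∑ n ∈ Finset.range N, (Real.log (n + 1) - Real.log (n + 1 + a) + a / (n + 1)) =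
      Real.BohrMollerup.logGammaSeq a N + Real.log a + a * (harmonic N - Real.log N) := by
  induction N with
  | zero => simp [Real.BohrMollerup.logGammaSeq]
  | succ N ih =>
    rw [Finset.sum_range_succ, ih]
    simp only [Real.BohrMollerup.logGammaSeq, Nat.factorial_succ, Nat.cast_mul,
      Finset.sum_range_succ _ (N + 1), harmonic_succ]
    rw [Real.log_mul (by positivity) (by positivity)]
    push_cast
    rw [add_comm ((N : ℝ) + 1) a]
    ring

lemma hasSum_log_sub_log_add_div {a : ℝ} (ha : 0 < a) :
    HasSum (fun n : ℕ => Real.log (n + 1) - Real.log (n + 1 + a) + a / (n + 1))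
      (Real.log (Real.Gamma a) + Real.log a + a * γ) := by
  rw [hasSum_iff_tendsto_nat_of_nonneg fun n => ?_]
  · simp_rw [sum_range_log_sub_log_add_div]
    exact ((Real.BohrMollerup.tendsto_log_gamma ha).add_const _).add
      (Real.tendsto_harmonic_sub_log.const_mul a)
  · have hn : (0 : ℝ) < n + 1 := n.cast_add_one_pos
    have := Real.log_le_sub_one_of_pos (show 0 < (n + 1 + a) / (n + 1) by positivity)
    rw [Real.log_div (by positivity) hn.ne'] at this
    have h : (n + 1 + a) / (n + 1) - 1 = a / (n + 1) := by field_simp; ring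
    linarith

/-- The remainder of the first-order Taylor expansion of `x ↦ x ^ (-z)` at `k`, with step `a`. -/
noncomputable def cpowRemainder (a k : ℝ) (z : ℂ) : ℂ :=
  ((k + a : ℝ) : ℂ) ^ (-z) - (k : ℂ) ^ (-z) + z * a * (k : ℂ) ^ (-z - 1)

lemma norm_cpowRemainder_le {a k : ℝ} (ha : 0 ≤ a) (hk : 0 < k) {z : ℂ} (hz : -2 ≤ z.re) :
    ‖cpowRemainder a k z‖ ≤ ‖z‖ * ‖z + 1‖ * k ^ (-2 - z.re) * a ^ 2 := by
  have hpow : ∀ w : ℂ, ∀ t ∈ Icc 0 a,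
      HasDerivAt (fun t : ℝ => ((k + t : ℝ) : ℂ) ^ w) (w * ((k + t : ℝ) : ℂ) ^ (w - 1)) t :=
    fun w t ht => (hasDerivAt_ofReal_cpow_const_of_pos (by linarith [ht.1]) w).comp_const_add k t
  have h := norm_sub_sub_smul_le_of_norm_deriv2_le (C := ‖z‖ * ‖z + 1‖ * k ^ (-2 - z.re)) ha
    (hpow (-z)) (fun t ht => (hpow (-z - 1) t ht).const_mul (-z)) fun t ht => ?_
  · simpa [cpowRemainder, real_smul, sub_eq_add_neg, mul_assoc, mul_left_comm] using h
  · have hkt : 0 < k + t := by linarith [ht.1]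
    rw [norm_mul, norm_mul, norm_neg, sub_sub, one_add_one_eq_two,
      norm_cpow_eq_rpow_re_of_pos hkt, show ‖-z - 1‖ = ‖z + 1‖ by rw [← norm_neg]; ring_nf,
      ← mul_assoc]
    gcongr
    rw [show (-z - 2).re = -2 - z.re by simp only [sub_re, neg_re, re_ofNat]; ring]
    exact Real.rpow_le_rpow_of_nonpos hk (by linarith [ht.1]) (by linarith)

lemma norm_cpowRemainder_le_of_norm_lt {a k R : ℝ} (ha0 : 0 ≤ a) (ha1 : a ≤ 1) (hk : 1 ≤ k)
    {z : ℂ} (hre : -1 / 2 < z.re) (hR : ‖z‖ < R) :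
    ‖cpowRemainder a k z‖ ≤ R * (R + 1) * k ^ (-3 / 2 : ℝ) := by
  have hR0 : 0 ≤ R := (norm_nonneg z).trans hR.le
  have hz1 : ‖z + 1‖ ≤ R + 1 := (norm_add_le _ _).trans (by rw [norm_one]; linarith)
  calc ‖cpowRemainder a k z‖ ≤ ‖z‖ * ‖z + 1‖ * k ^ (-2 - z.re) * a ^ 2 :=
        norm_cpowRemainder_le ha0 (by linarith) (by linarith)
    _ ≤ R * (R + 1) * k ^ (-3 / 2 : ℝ) * 1 := by
        gcongr
        · linarith
        · exact pow_le_one₀ ha0 ha1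
    _ = R * (R + 1) * k ^ (-3 / 2 : ℝ) := mul_one _

lemma differentiable_cpowRemainder {a k : ℝ} (ha : 0 ≤ a) (hk : 0 < k) :
    Differentiable ℂ (cpowRemainder a k) := by
  have hk' : (k : ℂ) ≠ 0 := ofReal_ne_zero.2 hk.ne'
  have hka : ((k + a : ℝ) : ℂ) ≠ 0 := ofReal_ne_zero.2 (by linarith)
  intro z
  unfold cpowRemainder
  fun_prop (disch := first | exact Or.inl hka | exact Or.inl hk')

lemma hasDerivAt_cpowRemainder_zero {a k : ℝ} (ha : 0 ≤ a) (hk : 0 < k) :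
    HasDerivAt (cpowRemainder a k) ((Real.log k - Real.log (k + a) + a / k : ℝ) : ℂ) 0 := by
  have hk' : (k : ℂ) ≠ 0 := ofReal_ne_zero.2 hk.ne'
  have hka : ((k + a : ℝ) : ℂ) ≠ 0 := ofReal_ne_zero.2 (by linarith)
  have h := (((hasDerivAt_neg (0 : ℂ)).const_cpow (Or.inl hka)).fun_sub
    ((hasDerivAt_neg 0).const_cpow (Or.inl hk'))).fun_add
    (((hasDerivAt_id' (0 : ℂ)).mul_const (a : ℂ)).fun_mul
      (((hasDerivAt_neg (0 : ℂ)).sub_const 1).const_cpow (Or.inl hk')))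
  refine HasDerivAt.congr_deriv (f := cpowRemainder a k) h ?_
  rw [← ofReal_log hk.le, ← ofReal_log (by linarith : 0 ≤ k + a)]
  simp only [neg_zero, cpow_zero, zero_sub, cpow_neg_one]
  push_cast
  ring

noncomputable def cpowRemainderSum (a : ℝ) (z : ℂ) : ℂ := ∑' n : ℕ, cpowRemainder a (n + 1) z

lemma cpowRemainderSum_zero (a : ℝ) : cpowRemainderSum a 0 = 0 := by
  simp [cpowRemainderSum, cpowRemainder]

lemma differentiableAt_cpowRemainderSum_and_hasSum_deriv {a : ℝ} (ha0 : 0 ≤ a) (ha1 : a ≤ 1)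
    {z : ℂ} (hz : -1 / 2 < z.re) :
    DifferentiableAt ℂ (cpowRemainderSum a) z ∧
      HasSum (fun n : ℕ => deriv (cpowRemainder a (n + 1)) z) (deriv (cpowRemainderSum a) z) := by
  set R := ‖z‖ + 1
  set U : Set ℂ := {w | -1 / 2 < w.re} ∩ Metric.ball 0 R
  have hU : IsOpen U := (isOpen_lt continuous_const continuous_re).inter Metric.isOpen_ball
  have hzU : z ∈ U := ⟨hz, by simp [R]⟩
  have hu : Summable fun n : ℕ => R * (R + 1) * ((n : ℝ) + 1) ^ (-3 / 2 : ℝ) := by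
    refine Summable.mul_left _ ?_
    exact_mod_cast (summable_nat_add_iff 1).2
      (Real.summable_nat_rpow.2 (by norm_num : (-3 / 2 : ℝ) < -1))
  have hdiff : ∀ n : ℕ, DifferentiableOn ℂ (cpowRemainder a (n + 1)) U := fun n =>
    (differentiable_cpowRemainder ha0 n.cast_add_one_pos).differentiableOn
  have hle : ∀ (n : ℕ) (w : ℂ), w ∈ U →
      ‖cpowRemainder a (n + 1) w‖ ≤ R * (R + 1) * ((n : ℝ) + 1) ^ (-3 / 2 : ℝ) :=
    fun n w hw => norm_cpowRemainder_le_of_norm_lt ha0 ha1 (by simp) hw.1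
      (mem_ball_zero_iff.1 hw.2)
  exact ⟨(differentiableOn_tsum_of_summable_norm hu hdiff hU hle).differentiableAt
    (hU.mem_nhds hzU), hasSum_deriv_of_summable_norm hu hdiff hU hle hzU⟩

lemma hasDerivAt_cpowRemainderSum_zero {a : ℝ} (ha0 : 0 < a) (ha1 : a ≤ 1) :
    HasDerivAt (cpowRemainderSum a)
      ((Real.log (Real.Gamma a) + Real.log a + a * γ : ℝ) : ℂ) 0 := by
  obtain ⟨hd, hsum⟩ := differentiableAt_cpowRemainderSum_and_hasSum_deriv ha0.le ha1
    (z := 0) (by norm_num)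
  have hlog : HasSum (fun n : ℕ => deriv (cpowRemainder a (n + 1)) 0)
      ((Real.log (Real.Gamma a) + Real.log a + a * γ : ℝ) : ℂ) := by
    simp_rw [fun n : ℕ => (hasDerivAt_cpowRemainder_zero ha0.le n.cast_add_one_pos).deriv]
    exact_mod_cast hasSum_ofReal.2 (hasSum_log_sub_log_add_div ha0)
  rw [← hsum.unique hlog]
  exact hd.hasDerivAt

lemma hasSum_ofReal_nat_add_one_add_cpow_neg {b : ℝ} (hb : b ∈ Icc 0 1) {z : ℂ}
    (hz : 1 < z.re) :
    HasSum (fun n : ℕ => ((n + 1 + b : ℝ) : ℂ) ^ (-z)) (hurwitzZeta b z - (b : ℂ) ^ (-z)) := by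
  have h := (hasSum_nat_add_iff' 1).2 (hasSum_hurwitzZeta_of_one_lt_re hb hz)
  simp only [Finset.sum_range_one, Nat.cast_zero, zero_add, one_div, ← cpow_neg] at h
  exact_mod_cast h

lemma hasSum_ofReal_nat_add_one_cpow_neg {z : ℂ} (hz : 1 < z.re) :
    HasSum (fun n : ℕ => ((n + 1 : ℝ) : ℂ) ^ (-z)) (riemannZeta z) := by
  have hz0 : -z ≠ 0 := neg_ne_zero.2 (by rintro rfl; norm_num at hz)
  simpa [zero_cpow hz0, hurwitzZeta_zero] using
    hasSum_ofReal_nat_add_one_add_cpow_neg (b := 0) (by simp) hz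

lemma hurwitzZeta_sub_riemannZeta_of_one_lt_re {a : ℝ} (ha : a ∈ Icc 0 1) {z : ℂ}
    (hz : 1 < z.re) :
    hurwitzZeta a z - riemannZeta z =
      (a : ℂ) ^ (-z) - a * riemannZeta₁ (z + 1) + cpowRemainderSum a z := by
  have hz0 : z ≠ 0 := by rintro rfl; norm_num at hz
  have hz1 : 1 < (z + 1).re := by rw [add_re, one_re]; linarith
  have h := ((hasSum_ofReal_nat_add_one_add_cpow_neg ha hz).sub
    (hasSum_ofReal_nat_add_one_cpow_neg hz)).add
    ((hasSum_ofReal_nat_add_one_cpow_neg hz1).mul_left (z * a))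
  have hsum : cpowRemainderSum a z = hurwitzZeta a z - a ^ (-z) - riemannZeta z +
      z * a * riemannZeta (z + 1) := by
    refine HasSum.tsum_eq (h.congr_fun fun n => ?_)
    simp only [cpowRemainder, neg_add, sub_eq_add_neg]
  rw [hsum, riemannZeta_eq_inv_sub_mul (s := z + 1) (by simpa using hz0), add_sub_cancel_right]
  field_simp
  ring

lemma hurwitzZeta_sub_riemannZeta_eq {a : ℝ} (ha0 : 0 < a) (ha1 : a ≤ 1) {z : ℂ}
    (hz : -1 / 2 < z.re) :
    hurwitzZeta a z - riemannZeta z =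
      (a : ℂ) ^ (-z) - a * riemannZeta₁ (z + 1) + cpowRemainderSum a z := by
  have hH : IsOpen {w : ℂ | -1 / 2 < w.re} := isOpen_lt continuous_const continuous_re
  have hL : AnalyticOnNhd ℂ (fun w => hurwitzZeta a w - riemannZeta w) {w | -1 / 2 < w.re} := by
    refine DifferentiableOn.analyticOnNhd (fun w _ => ?_) hH
    simpa [hurwitzZeta_zero] using
      (differentiable_hurwitzZeta_sub_hurwitzZeta a 0 w).differentiableWithinAt
  have hR : AnalyticOnNhd ℂ (fun w => (a : ℂ) ^ (-w) - a * riemannZeta₁ (w + 1) +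
      cpowRemainderSum a w) {w | -1 / 2 < w.re} := by
    refine DifferentiableOn.analyticOnNhd (fun w hw => ?_) hH
    have ha : (a : ℂ) ≠ 0 := ofReal_ne_zero.2 ha0.ne'
    exact ((((differentiable_neg w).const_cpow (Or.inl ha)).sub
      (((differentiable_riemannZeta₁.comp (differentiable_id.add_const 1)) w).const_mul _)).add
      (differentiableAt_cpowRemainderSum_and_hasSum_deriv ha0.le ha1 hw).1).differentiableWithinAt
  refine hL.eqOn_of_preconnected_of_eventuallyEq hR (convex_halfSpace_re_gt _).isPreconnected
    (z₀ := 2) (by norm_num) ?_ hz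
  filter_upwards [(isOpen_lt continuous_const continuous_re).mem_nhds
    (show (1 : ℝ) < (2 : ℂ).re by norm_num)] with w hw
  exact hurwitzZeta_sub_riemannZeta_of_one_lt_re ⟨ha0.le, ha1⟩ hw

lemma hurwitzZeta_apply_zero {a : ℝ} (ha0 : 0 < a) (ha1 : a ≤ 1) :
    hurwitzZeta a 0 = 1 / 2 - a := by
  have h := hurwitzZeta_sub_riemannZeta_eq ha0 ha1 (z := 0) (by norm_num)
  rw [riemannZeta_zero, cpowRemainderSum_zero, neg_zero, cpow_zero, zero_add,
    riemannZeta₁_one] at h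
  linear_combination h

lemma hasDerivAt_hurwitzZeta_zero {a : ℝ} (ha0 : 0 < a) (ha1 : a ≤ 1) :
    HasDerivAt (hurwitzZeta a)
      (Real.log (Real.Gamma a) - Real.log (2 * Real.pi) / 2 : ℝ) 0 := by
  have hζ : HasDerivAt riemannZeta (-Real.log (2 * Real.pi) / 2 : ℝ) 0 := by
    have := (differentiableAt_riemannZeta zero_ne_one).hasDerivAt
    rw [deriv_riemannZeta_zero] at this
    refine this.congr_deriv ?_
    rw [ofReal_div, ofReal_neg, ofReal_log (by positivity)]
    push_cast
    ring
  have hζ₁ : HasDerivAt (fun w => riemannZeta₁ (w + 1)) γ 0 := by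
    have := (differentiable_riemannZeta₁ 1).hasDerivAt
    rw [deriv_riemannZeta₁_one] at this
    exact HasDerivAt.comp_add_const 0 1 (by simpa using this)
  have hR := ((((hasDerivAt_neg (0 : ℂ)).const_cpow (c := (a : ℂ)) (Or.inl
    (ofReal_ne_zero.2 ha0.ne'))).fun_sub (hζ₁.const_mul (a : ℂ))).fun_add
    (hasDerivAt_cpowRemainderSum_zero ha0 ha1)).fun_add hζ
  have hev : (fun w => (a : ℂ) ^ (-w) - a * riemannZeta₁ (w + 1) + cpowRemainderSum a w +
      riemannZeta w) =ᶠ[𝓝 0] hurwitzZeta a := by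
    filter_upwards [(isOpen_lt continuous_const continuous_re).mem_nhds
      (show (-1 / 2 : ℝ) < (0 : ℂ).re by norm_num)] with w hw
    rw [← hurwitzZeta_sub_riemannZeta_eq ha0 ha1 hw, sub_add_cancel]
  refine (hR.congr_of_eventuallyEq hev.symm).congr_deriv ?_
  rw [← ofReal_log ha0.le]
  push_cast
  simp only [neg_zero, cpow_zero]
  ring

lemma exp_neg_deriv_natCast_mul_cpow_mul {c F' : ℂ} (hc : c ≠ 0) (b : ℕ) {F : ℂ → ℂ}
    (hF : HasDerivAt F F' 0) :
    exp (-deriv (fun z => (b : ℂ) * c ^ z * F z) 0) = (c ^ (-F 0) * exp (-F')) ^ b := by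
  have h := (((hasDerivAt_id' (0 : ℂ)).const_cpow (c := c) (Or.inl hc)).const_mul
    (b : ℂ)).fun_mul hF
  rw [h.deriv, cpow_def_of_ne_zero hc (-F 0), ← exp_add, ← exp_nat_mul, cpow_zero]
  congr 1
  ring

theorem regularized_det_Phi_two_general (b : ℕ) (s : ℝ) (hs0 : 0 < s) (hs1 : s < 1) :
    Complex.exp (- deriv (fun z : ℂ =>
        (b : ℂ) * ((2 * Real.pi : ℝ) : ℂ) ^ z *
          (hurwitzZeta (s : UnitAddCircle) z + ((s : ℂ) - 1) ^ (-z))) 0) =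
      (((2 * Real.pi : ℝ) : ℂ) ^ ((s : ℂ) - 1) / Complex.Gamma ((s : ℂ) - 1)) ^ b := by
  have hs1' : (s : ℂ) - 1 ≠ 0 := sub_ne_zero.2 (ofReal_ne_one.2 hs1.ne)
  have h2π : ((2 * Real.pi : ℝ) : ℂ) ≠ 0 := ofReal_ne_zero.2 (by positivity)
  have hF := (hasDerivAt_hurwitzZeta_zero hs0 hs1.le).fun_add
    ((hasDerivAt_neg (0 : ℂ)).const_cpow (c := (s : ℂ) - 1) (Or.inl hs1'))
  rw [exp_neg_deriv_natCast_mul_cpow_mul h2π b hF, hurwitzZeta_apply_zero hs0 hs1.le]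
  congr 1
  have hΓs : ((Real.log (Real.Gamma s) : ℝ) : ℂ) = log (Gamma s) := by
    rw [ofReal_log (Real.Gamma_pos_of_pos hs0).le, Gamma_ofReal]
  have hΓ : Gamma (s - 1) = exp (log (Gamma s) - log (s - 1)) := by
    have hrec := Gamma_add_one ((s : ℂ) - 1) hs1'
    rw [sub_add_cancel] at hrec
    rw [exp_sub, exp_log (Gamma_ne_zero_of_re_pos (by simpa)), exp_log hs1', hrec,
      mul_div_cancel_left₀ _ hs1']
  simp only [neg_zero, cpow_zero, cpow_def_of_ne_zero h2π,
    ← ofReal_log (by positivity : (0 : ℝ) ≤ 2 * Real.pi), hΓ, ← exp_add, ← exp_sub]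
  congr 1
  push_cast
  rw [hΓs]
  ring

/-- Proposition 2.24, eq. (2.32): the zeta-regularized determinant
`det_∞(s/(2π) − Φ_2/(2π))` equals `Γ_ℂ(s−1)^{-b_2}`, where `Φ_2` has spectrum
`{n ∈ ℤ : n ≤ 1}`, each eigenvalue of multiplicity `b = b_2`, so that its zeta function is
`b (2π)^z (ζ_H(s, z) + (s − 1)^{−z})`. -/
theorem regularized_det_Phi_two (b : ℕ) (hb : 0 < b) (s : ℝ) (hs0 : 0 < s) (hs1 : s < 1) :
    Complex.exp (- deriv (fun z : ℂ =>
        (b : ℂ) * ((2 * Real.pi : ℝ) : ℂ) ^ z *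
          (hurwitzZeta (s : UnitAddCircle) z + ((s : ℂ) - 1) ^ (-z))) 0) =
      (((2 * Real.pi : ℝ) : ℂ) ^ ((s : ℂ) - 1) / Complex.Gamma ((s : ℂ) - 1)) ^ b :=
  regularized_det_Phi_two_general b s hs0 hs1
end

section
/- (Theorem 4.12(2), proof: the kernel of the coboundary δ consists exactly of the constant functions.) Let g ≥ 2 and m ≥ 1 be integers. If f : W_m → ℤ satisfies f(init w) = f(tail w) for every reduced word w of length m+1, then f is constant, i.e. f(u) = f(v) for all u, v ∈ W_m. -/
/-- A reduced word of length `m` over the `2g` symbols `{g_1,…,g_g, g_1⁻¹,…,g_g⁻¹}`, encoded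
as elements of `ZMod (2g)` with the inverse of `a` being `a + g`: no symbol is immediately
followed by its inverse. -/
def ReducedWord (g m : ℕ) : Type :=
  { w : Fin m → ZMod (2 * g) //
    ∀ i : ℕ, (h : i + 1 < m) → w ⟨i + 1, h⟩ ≠ w ⟨i, by omega⟩ + (g : ZMod (2 * g)) }

/-- The reduced word obtained by deleting the last letter. -/
def ReducedWord.init {g m : ℕ} (w : ReducedWord g (m + 1)) : ReducedWord g m :=
  ⟨fun i => w.1 i.castSucc, fun i h => w.2 i (by omega)⟩

/-- The reduced word obtained by deleting the first letter. -/
def ReducedWord.tail {g m : ℕ} (w : ReducedWord g (m + 1)) : ReducedWord g m :=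
  ⟨fun i => w.1 i.succ, fun i h => w.2 (i + 1) (by omega)⟩

/-- Auxiliary: the window of length `m` at offset `k` in a reduced sequence. -/
def slideWin {g : ℕ} (m : ℕ) (s : ℕ → ZMod (2 * g))
    (hs : ∀ i : ℕ, i + 1 ≤ 2 * m → s (i + 1) ≠ s i + (g : ZMod (2 * g)))
    (k : ℕ) (hk : k ≤ m + 1) : ReducedWord g m :=
  ⟨fun i => s (k + i), fun i h => hs (k + i) (by omega)⟩

/-- Auxiliary: the window of length `m+1` at offset `k` in a reduced sequence. -/
def slideWinLong {g : ℕ} (m : ℕ) (s : ℕ → ZMod (2 * g))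
    (hs : ∀ i : ℕ, i + 1 ≤ 2 * m → s (i + 1) ≠ s i + (g : ZMod (2 * g)))
    (k : ℕ) (hk : k ≤ m) : ReducedWord g (m + 1) :=
  ⟨fun i => s (k + i), fun i h => hs (k + i) (by omega)⟩

/-- Theorem 4.12(2), proof: the kernel of the coboundary `δ` consists exactly of the
constant functions: if `f(init w) = f(tail w)` for every reduced word `w` of length `m+1`,
then `f` is constant on `W_m`. -/
theorem ker_coboundary_constant (g m : ℕ) (hg : 2 ≤ g) (hm : 1 ≤ m)
    (f : ReducedWord g m → ℤ)
    (hf : ∀ w : ReducedWord g (m + 1), f w.init = f w.tail) :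
    ∀ u v : ReducedWord g m, f u = f v := by
  intro u v
  classical
  haveI : NeZero (2 * g) := ⟨by omega⟩
  -- choose a bridge letter c
  obtain ⟨c, hc1, hc2⟩ :
      ∃ c : ZMod (2 * g), c ≠ u.1 ⟨m - 1, by omega⟩ + (g : ZMod (2 * g)) ∧
        v.1 ⟨0, by omega⟩ ≠ c + (g : ZMod (2 * g)) := by
    set a := u.1 ⟨m - 1, by omega⟩ + (g : ZMod (2 * g)) with ha
    set b := v.1 ⟨0, by omega⟩ - (g : ZMod (2 * g)) with hb
    have hcard : Fintype.card (ZMod (2 * g)) = 2 * g := ZMod.card _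
    have hpair : ({a, b} : Finset (ZMod (2 * g))).card ≤ 2 := by
      apply le_trans (Finset.card_insert_le _ _)
      simp
    have hne : (({a, b} : Finset (ZMod (2 * g)))ᶜ).Nonempty := by
      rw [← Finset.card_pos, Finset.card_compl, hcard]
      omega
    obtain ⟨c, hc⟩ := hne
    rw [Finset.mem_compl, Finset.mem_insert, Finset.mem_singleton] at hc
    push_neg at hc
    refine ⟨c, hc.1, fun h => hc.2 ?_⟩
    rw [hb, h]; ring
  -- the long sequence: u, then c, then v
  set s : ℕ → ZMod (2 * g) := fun i =>
    if h : i < m then u.1 ⟨i, h⟩ else if i = m then c else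
    if h : i - (m + 1) < m then v.1 ⟨i - (m + 1), h⟩ else 0 with hs_def
  have hs : ∀ i : ℕ, i + 1 ≤ 2 * m → s (i + 1) ≠ s i + (g : ZMod (2 * g)) := by
    intro i hi
    rcases lt_trichotomy (i + 1) m with h | h | h
    · simp only [hs_def]
      rw [dif_pos h, dif_pos (by omega : i < m)]
      exact u.2 i h
    · simp only [hs_def]
      rw [dif_neg (by omega), if_pos h, dif_pos (by omega : i < m)]
      have e : (⟨i, by omega⟩ : Fin m) = ⟨m - 1, by omega⟩ := by
        apply Fin.ext; simp; omega
      rw [e]; exact hc1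
    · rcases eq_or_lt_of_le (by omega : m ≤ i) with h2 | h2
      · simp only [hs_def]
        rw [dif_neg (by omega), if_neg (by omega),
          dif_pos (by omega : i + 1 - (m + 1) < m),
          dif_neg (by omega), if_pos h2.symm]
        have e : (⟨i + 1 - (m + 1), by omega⟩ : Fin m) = ⟨0, by omega⟩ := by
          apply Fin.ext; simp; omega
        rw [e]; exact hc2
      · simp only [hs_def]
        rw [dif_neg (by omega), if_neg (by omega),
          dif_pos (by omega : i + 1 - (m + 1) < m),
          dif_neg (by omega), if_neg (by omega),
          dif_pos (by omega : i - (m + 1) < m)]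
        have hv := v.2 (i - (m + 1)) (by omega)
        have e : (⟨i + 1 - (m + 1), by omega⟩ : Fin m)
            = ⟨i - (m + 1) + 1, by omega⟩ := by
          apply Fin.ext; simp; omega
        rw [e]; exact hv
  -- sliding windows
  have step : ∀ k : ℕ, (hk : k ≤ m) →
      f (slideWin m s hs k (by omega)) = f (slideWin m s hs (k + 1) (by omega)) := by
    intro k hk
    have hz := hf (slideWinLong m s hs k hk)
    have h1 : (slideWinLong m s hs k hk).init = slideWin m s hs k (by omega) := by
      apply Subtype.ext; funext i
      exact congrArg s rfl
    have h2 : (slideWinLong m s hs k hk).tail = slideWin m s hs (k + 1) (by omega) := by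
      apply Subtype.ext; funext i
      show s (k + ((i : ℕ) + 1)) = s (k + 1 + (i : ℕ))
      exact congrArg s (by omega)
    rw [h1, h2] at hz
    exact hz
  have chain : ∀ k : ℕ, (hk : k ≤ m + 1) →
      f (slideWin m s hs 0 (by omega)) = f (slideWin m s hs k hk) := by
    intro k
    induction k with
    | zero => intro _; rfl
    | succ n ih =>
      intro hk
      rw [ih (by omega)]
      exact step n (by omega)
  have hu : slideWin m s hs 0 (by omega) = u := by
    apply Subtype.ext; funext i
    show s (0 + (i : ℕ)) = u.1 i
    simp only [hs_def]
    rw [dif_pos (by omega : 0 + (i : ℕ) < m)]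
    exact congrArg u.1 (by apply Fin.ext; simp)
  have hv : slideWin m s hs (m + 1) (by omega) = v := by
    apply Subtype.ext; funext i
    show s (m + 1 + (i : ℕ)) = v.1 i
    simp only [hs_def]
    rw [dif_neg (by omega), if_neg (by omega),
      dif_pos (by omega : m + 1 + (i : ℕ) - (m + 1) < m)]
    exact congrArg v.1 (by apply Fin.ext; simp)
  calc f u = f (slideWin m s hs 0 (by omega)) := by rw [hu]
    _ = f (slideWin m s hs (m + 1) (by omega)) := chain (m + 1) (by omega)
    _ = f v := by rw [hv]
end

section
/- (Theorem 4.12(2): the graded pieces F_n of the filtration of H^1(S_T, ℤ) are free abelian of rank 2g(2g−1)^{n−1}(2g−2) + 1.) Let g ≥ 2 and n ≥ 1 be integers. The cokernel F_n of the coboundary, i.e. the quotient additive group (W_{n+1} → ℤ) / δ((W_n → ℤ)) of the free abelian group of ℤ-valued functions on reduced words of length n+1 by the image of δ, is torsion-free, and in fact is a free abelian group of rank 2g(2g−1)^{n−1}(2g−2) + 1: there is an additive group isomorphism F_n ≃+ (Fin (2*g*(2*g−1)^(n−1)*(2*g−2) + 1) → ℤ). -/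
/-- The coboundary `δ : (W_m → ℤ) → (W_{m+1} → ℤ)`, `(δ f)(w) = f(init w) − f(tail w)`. -/
def coboundary (g m : ℕ) : (ReducedWord g m → ℤ) →+ (ReducedWord g (m + 1) → ℤ) where
  toFun f := fun w => f w.init - f w.tail
  map_zero' := by funext w; simp
  map_add' f₁ f₂ := by funext w; simp; ring

namespace ReducedWord

variable {g : ℕ}

noncomputable instance [NeZero g] (m : ℕ) : Fintype (ReducedWord g m) := by
  unfold ReducedWord; classical infer_instance

instance [NeZero g] (m : ℕ) : Nonempty (ReducedWord g m) := by
  refine ⟨⟨fun _ => 0, fun i h hg => ?_⟩⟩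
  rw [zero_add, eq_comm, ZMod.natCast_eq_zero_iff] at hg
  exact Nat.not_dvd_of_pos_of_lt (Nat.pos_of_neZero g) (by have := Nat.pos_of_neZero g; omega) hg

def snocEquiv (m : ℕ) :
    ReducedWord g (m + 2) ≃
      Σ w : ReducedWord g (m + 1), {a : ZMod (2 * g) // a ≠ w.1 (Fin.last m) + g} where
  toFun v := ⟨v.init, v.1 (Fin.last (m + 1)), v.2 m (by omega)⟩
  invFun p := ⟨Fin.snoc p.1.1 p.2.1, fun i h => by
    rcases Nat.lt_or_ge (i + 1) (m + 1) with hi | hi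
    · simpa [Fin.snoc, hi, Nat.lt_of_succ_lt hi] using p.1.2 i hi
    · obtain rfl : i = m := by omega
      show Fin.snoc (α := fun _ => ZMod (2 * g)) p.1.1 p.2.1 (Fin.last (i + 1)) ≠
        Fin.snoc (α := fun _ => ZMod (2 * g)) p.1.1 p.2.1 (Fin.last i).castSucc + g
      rw [Fin.snoc_last, Fin.snoc_castSucc]
      exact p.2.2⟩
  left_inv v := Subtype.ext (Fin.snoc_init_self v.1)
  right_inv p := Sigma.subtype_ext
    (Subtype.ext (Fin.init_snoc (α := fun _ => ZMod (2 * g)) p.2.1 p.1.1))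
    (Fin.snoc_last (α := fun _ => ZMod (2 * g)) p.2.1 p.1.1)

section Card

variable [NeZero g]

theorem card_one : Fintype.card (ReducedWord g 1) = 2 * g := by
  rw [← ZMod.card (2 * g)]
  exact Fintype.card_congr
    { toFun w := w.1 0
      invFun a := ⟨fun _ => a, fun i h => absurd h (by omega)⟩
      left_inv w := Subtype.ext (funext fun i => congrArg w.1 (Subsingleton.elim _ _))
      right_inv _ := rfl }

theorem card_add_two (m : ℕ) :
    Fintype.card (ReducedWord g (m + 2)) = Fintype.card (ReducedWord g (m + 1)) * (2 * g - 1) := by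
  classical
  simp [Fintype.card_congr (snocEquiv m), Fintype.card_sigma, Fintype.card_subtype_compl,
    ZMod.card]

theorem card_succ (m : ℕ) : Fintype.card (ReducedWord g (m + 1)) = 2 * g * (2 * g - 1) ^ m := by
  induction m with
  | zero => simp [card_one]
  | succ m ih => rw [card_add_two, ih, pow_succ, mul_assoc, mul_assoc]

end Card

theorem apply_ne {m : ℕ} (w : ReducedWord g m) {i j : ℕ} (hj : j < m) (hij : j = i + 1) :
    w.1 ⟨j, hj⟩ ≠ w.1 ⟨i, by omega⟩ + (g : ZMod (2 * g)) := by
  subst hij; exact w.2 i hj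

def window {N : ℕ} (c : ReducedWord g N) (j m : ℕ) (h : j + m ≤ N) : ReducedWord g m :=
  ⟨fun i => c.1 ⟨j + i, by omega⟩, fun i hi => c.2 (j + i) (by omega)⟩

theorem init_window {N m : ℕ} (c : ReducedWord g N) (j : ℕ) (h : j + (m + 1) ≤ N) :
    (c.window j (m + 1) h).init = c.window j m (by omega) :=
  rfl

theorem tail_window {N m : ℕ} (c : ReducedWord g N) (j : ℕ) (h : j + (m + 1) ≤ N) :
    (c.window j (m + 1) h).tail = c.window (j + 1) m (by omega) :=
  Subtype.ext (funext fun i => congrArg c.1 (Fin.ext (by simp [Fin.val_succ]; omega)))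

def join {p q : ℕ} (u : ReducedWord g p) (b : ZMod (2 * g)) (v : ReducedWord g q)
    (hub : ∀ h : 0 < p, b ≠ u.1 ⟨p - 1, by omega⟩ + g) (hbv : ∀ h : 0 < q, v.1 ⟨0, h⟩ ≠ b + g) :
    ReducedWord g (p + 1 + q) :=
  ⟨fun i => if h : (i : ℕ) < p then u.1 ⟨i, h⟩
      else if h' : (i : ℕ) = p then b else v.1 ⟨i - (p + 1), by omega⟩, fun i hi => by
    dsimp only
    split_ifs with h₁ <;> try omega
    · exact u.2 i h₁
    · obtain rfl : i = p - 1 := by omega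
      exact hub (by omega)
    · obtain rfl : i = p := by omega
      simpa using hbv (by omega)
    · exact v.apply_ne (i := i - (p + 1)) _ (by omega)⟩

theorem window_join_left {p q : ℕ} (u : ReducedWord g p) (b : ZMod (2 * g)) (v : ReducedWord g q)
    (hub hbv) : (join u b v hub hbv).window 0 p (by omega) = u :=
  Subtype.ext (funext fun i => by simp [window, join])

theorem window_join_right {p q : ℕ} (u : ReducedWord g p) (b : ZMod (2 * g)) (v : ReducedWord g q)
    (hub hbv) : (join u b v hub hbv).window (p + 1) q le_rfl = v :=
  Subtype.ext (funext fun i => by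
    simp [window, join, show ¬p + 1 + (i : ℕ) < p by omega, show p + 1 + (i : ℕ) ≠ p by omega])

theorem apply_window_eq_apply_window_zero {α : Sort*} {m N : ℕ} {f : ReducedWord g m → α}
    (hf : ∀ w : ReducedWord g (m + 1), f w.init = f w.tail) (c : ReducedWord g N) :
    ∀ j (h : j + m ≤ N), f (c.window j m h) = f (c.window 0 m (by omega))
  | 0, _ => rfl
  | j + 1, h => by
    rw [← tail_window c j (by omega), ← hf, init_window, apply_window_eq_apply_window_zero hf c j]

theorem eq_of_forall_init_eq_tail (hg : 2 ≤ g) {α : Sort*} {m : ℕ} {f : ReducedWord g m → α}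
    (hf : ∀ w : ReducedWord g (m + 1), f w.init = f w.tail) (u v : ReducedWord g m) :
    f u = f v := by
  rcases m with _ | m
  · exact congrArg f (Subtype.ext (funext fun i => i.elim0))
  have : NeZero g := ⟨by omega⟩
  obtain ⟨b, hbu, hbv⟩ := ENat.exists_ne_ne_of_three_le
    (by rw [ENat.card_eq_coe_fintype_card, ZMod.card]; exact_mod_cast (by omega : 3 ≤ 2 * g))
    (u.1 (Fin.last m) + g) (v.1 0 - g)
  let c := join u b v (fun _ => hbu) (fun _ h => hbv (eq_sub_of_add_eq h.symm))
  calc f u = f (c.window 0 (m + 1) (by omega)) := by rw [window_join_left]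
    _ = f (c.window (m + 1 + 1) (m + 1) le_rfl) :=
      (apply_window_eq_apply_window_zero hf c _ _).symm
    _ = f v := by rw [window_join_right]

end ReducedWord

open Module

section RankNullity

universe u

variable {R : Type*} {M N : Type u} [Ring R] [StrongRankCondition R] [HasRankNullity.{u} R]
  [AddCommGroup M] [AddCommGroup N] [Module R M] [Module R N] [Module.Finite R M]
  [Module.Finite R N]

theorem LinearMap.finrank_quotient_range_add_finrank (f : M →ₗ[R] N) :
    finrank R (N ⧸ LinearMap.range f) + finrank R M =
      finrank R N + finrank R (LinearMap.ker f) := by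
  rw [← (LinearMap.range f).finrank_quotient_add_finrank,
    ← (LinearMap.ker f).finrank_quotient_add_finrank, f.quotKerEquivRange.finrank_eq]
  ring

end RankNullity

theorem Submodule.isTorsionFree_quotient_of_smul_mem {R M : Type*} [CommRing R] [IsDomain R]
    [AddCommGroup M] [Module R M] (p : Submodule R M)
    (hp : ∀ r : R, r ≠ 0 → ∀ x : M, r • x ∈ p → x ∈ p) : IsTorsionFree R (M ⧸ p) := by
  refine .of_smul_eq_zero fun r x hx => or_iff_not_imp_left.mpr fun hr => ?_
  induction x using Submodule.Quotient.induction_on with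
  | H x =>
    rw [← Submodule.Quotient.mk_smul, Submodule.Quotient.mk_eq_zero] at hx
    exact (Submodule.Quotient.mk_eq_zero p).mpr (hp r hr x hx)

section Coboundary

variable {g m : ℕ}

theorem coboundary_apply (f : ReducedWord g m → ℤ) (w : ReducedWord g (m + 1)) :
    coboundary g m f w = f w.init - f w.tail :=
  rfl

theorem ker_coboundary (hg : 2 ≤ g) :
    LinearMap.ker (coboundary g m).toIntLinearMap = ℤ ∙ (1 : ReducedWord g m → ℤ) := by
  have : NeZero g := ⟨by omega⟩
  ext f
  simp only [LinearMap.mem_ker, AddMonoidHom.coe_toIntLinearMap, Submodule.mem_span_singleton]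
  constructor
  · intro hf
    obtain ⟨u₀⟩ : Nonempty (ReducedWord g m) := inferInstance
    refine ⟨f u₀, funext fun u => ?_⟩
    simpa using ReducedWord.eq_of_forall_init_eq_tail hg
      (fun w => sub_eq_zero.mp (congrFun hf w)) u₀ u
  · rintro ⟨a, rfl⟩
    funext w
    simp [coboundary_apply]

theorem mem_range_coboundary_of_smul_mem (hg : 2 ≤ g) {k : ℤ} (hk : k ≠ 0)
    {b : ReducedWord g (m + 1) → ℤ} (hb : k • b ∈ (coboundary g m).range) :
    b ∈ (coboundary g m).range := by
  have : NeZero g := ⟨by omega⟩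
  obtain ⟨f, hf⟩ := hb
  obtain ⟨u₀⟩ : Nonempty (ReducedWord g m) := inferInstance
  have hδf (w : ReducedWord g (m + 1)) : f w.init - f w.tail = k * b w := congrFun hf w
  have hdvd (u : ReducedWord g m) : k ∣ f u - f u₀ :=
    Int.ModEq.dvd <| ReducedWord.eq_of_forall_init_eq_tail hg (f := fun u => f u % k)
      (fun w => Int.ModEq.symm (Int.modEq_iff_dvd.mpr ⟨b w, hδf w⟩)) u₀ u
  refine ⟨fun u => (f u - f u₀) / k, funext fun w => mul_left_cancel₀ hk ?_⟩
  rw [coboundary_apply, mul_sub, Int.mul_ediv_cancel' (hdvd _), Int.mul_ediv_cancel' (hdvd _),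
    ← hδf]
  ring

theorem finrank_quotient_range_coboundary [NeZero g] (hg : 2 ≤ g) (m : ℕ) :
    finrank ℤ ((ReducedWord g (m + 1 + 1) → ℤ) ⧸ (coboundary g (m + 1)).range.toIntSubmodule) =
      2 * g * (2 * g - 1) ^ m * (2 * g - 2) + 1 := by
  have h := (coboundary g (m + 1)).toIntLinearMap.finrank_quotient_range_add_finrank
  rw [AddMonoidHom.coe_toIntLinearMap_range, ker_coboundary hg,
    (LinearEquiv.toSpanNonzeroSingleton ℤ _ 1 one_ne_zero).finrank_eq.symm, finrank_self,
    finrank_fintype_fun_eq_card, finrank_fintype_fun_eq_card, ReducedWord.card_succ,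
    ReducedWord.card_succ, pow_succ, ← mul_assoc] at h
  have hsplit : 2 * g * (2 * g - 1) ^ m * (2 * g - 1) =
      2 * g * (2 * g - 1) ^ m * (2 * g - 2) + 2 * g * (2 * g - 1) ^ m := by
    rw [← Nat.mul_succ]
    congr 1
    omega
  omega

end Coboundary

/-- Theorem 4.12(2): the graded piece `F_n = (W_{n+1} → ℤ)/δ((W_n → ℤ))` of the filtration of
`H^1(S_T, ℤ)` is torsion-free, and in fact is a free abelian group of rank
`2g(2g−1)^{n−1}(2g−2) + 1`. -/
theorem graded_piece_free_abelian (g n : ℕ) (hg : 2 ≤ g) (hn : 1 ≤ n) :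
    (∀ x : (ReducedWord g (n + 1) → ℤ) ⧸ (coboundary g n).range,
      ∀ k : ℕ, k ≠ 0 → k • x = 0 → x = 0) ∧
    Nonempty (((ReducedWord g (n + 1) → ℤ) ⧸ (coboundary g n).range) ≃+
      (Fin (2 * g * (2 * g - 1) ^ (n - 1) * (2 * g - 2) + 1) → ℤ)) := by
  refine ⟨fun x k hk hx => ?_, ?_⟩
  · induction x using QuotientAddGroup.induction_on with
    | H b =>
      rw [← QuotientAddGroup.mk_nsmul, QuotientAddGroup.eq_zero_iff, ← natCast_zsmul] at hx
      exact (QuotientAddGroup.eq_zero_iff b).mpr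
        (mem_range_coboundary_of_smul_mem hg (by exact_mod_cast hk) hx)
  · have : NeZero g := ⟨by omega⟩
    have := (coboundary g n).range.toIntSubmodule.isTorsionFree_quotient_of_smul_mem
      fun k hk b hb => mem_range_coboundary_of_smul_mem hg hk hb
    obtain ⟨m, rfl⟩ : ∃ m, n = m + 1 := ⟨n - 1, by omega⟩
    exact ⟨(finBasisOfFinrankEq ℤ _ (finrank_quotient_range_coboundary hg m)).equivFun.toAddEquiv⟩
end

section
/- (Theorem 4.12(1), proof: the invariants C(S, ℤ)^T form a copy of ℤ.) Let g ≥ 2. Every continuous function f : S → ℤ (with ℤ carrying the discrete topology) satisfying f(T w) = f(w) for all w ∈ S is constant. In particular, the group of T-invariant continuous integer-valued functions on S consists exactly of the constant functions, so C(S, ℤ)^T ≅ ℤ. -/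
/-- The space of doubly infinite reduced sequences over the `2g` symbols, encoded as
elements of `ZMod (2g)` (the inverse of a symbol `a` being `a + g`), with the subspace
topology from the product topology on `ℤ → ZMod (2g)` (`ZMod (2g)` being discrete). -/
abbrev ShiftSpace (g : ℕ) : Type :=
  { w : ℤ → ZMod (2 * g) // ∀ i : ℤ, w (i + 1) ≠ w i + (g : ZMod (2 * g)) }

/-- The two-sided shift `T : S → S`, `(T w)(i) = w(i+1)`. -/
def ShiftSpace.shift {g : ℕ} (w : ShiftSpace g) : ShiftSpace g :=
  ⟨fun i => w.1 (i + 1), fun i => w.2 (i + 1)⟩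

lemma shift_iterate_apply {g : ℕ} (w : ShiftSpace g) (n : ℕ) (i : ℤ) :
    (ShiftSpace.shift^[n] w).1 i = w.1 (i + n) := by
  induction n generalizing w with
  | zero => simp
  | succ n ih =>
    rw [Function.iterate_succ_apply, ih]
    show w.1 (i + n + 1) = w.1 (i + (n+1 : ℕ))
    push_cast
    ring_nf

lemma f_shift_iterate {g : ℕ} (f : ShiftSpace g → ℤ)
    (hT : ∀ w : ShiftSpace g, f w.shift = f w) (w : ShiftSpace g) (n : ℕ) :
    f (ShiftSpace.shift^[n] w) = f w := by
  induction n with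
  | zero => simp
  | succ n ih => rw [Function.iterate_succ_apply', hT, ih]

lemma local_const {g : ℕ} (f : ShiftSpace g → ℤ) (hf : Continuous f) (u : ShiftSpace g) :
    ∃ I : Finset ℤ, ∀ w : ShiftSpace g, (∀ i ∈ I, w.1 i = u.1 i) → f w = f u := by
  have hs : IsOpen (f ⁻¹' {f u}) := (isOpen_discrete {f u}).preimage hf
  rw [isOpen_induced_iff] at hs
  obtain ⟨t, ht, hts⟩ := hs
  have hu : u.1 ∈ t := by
    have : u ∈ f ⁻¹' {f u} := rfl
    rw [← hts] at this; exact this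
  obtain ⟨I, σ, hσ, hsub⟩ := isOpen_pi_iff.mp ht u.1 hu
  refine ⟨I, fun w hw => ?_⟩
  have : w.1 ∈ t := by
    apply hsub
    intro i hi
    rw [hw i hi]
    exact (hσ i hi).2
  have : w ∈ f ⁻¹' {f u} := by rw [← hts]; exact this
  exact this

/-- Theorem 4.12(1), proof: the invariants `C(S, ℤ)^T` form a copy of `ℤ`: every continuous
`T`-invariant integer-valued function on `S` is constant. -/
theorem shift_invariant_continuous_functions_constant (g : ℕ) (hg : 2 ≤ g)
    (f : ShiftSpace g → ℤ) (hf : Continuous f)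
    (hT : ∀ w : ShiftSpace g, f w.shift = f w) :
    ∀ u v : ShiftSpace g, f u = f v := by
  intro u v
  haveI : NeZero (2 * g) := ⟨by omega⟩
  obtain ⟨I, hI⟩ := local_const f hf u
  obtain ⟨J, hJ⟩ := local_const f hf v
  set N₁ : ℕ := I.sup Int.natAbs with hN₁
  set N₂ : ℕ := J.sup Int.natAbs with hN₂
  set K : ℕ := N₁ + N₂ + 2 with hK
  -- pick a connecting symbol
  obtain ⟨c, hc1, hc2⟩ :
      ∃ c : ZMod (2 * g), c ≠ u.1 (N₁ : ℤ) + (g : ZMod (2*g)) ∧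
        v.1 (-(N₂ : ℤ)) ≠ c + (g : ZMod (2*g)) := by
    by_contra h
    push_neg at h
    have hsub : (Finset.univ : Finset (ZMod (2*g))) ⊆
        {u.1 (N₁ : ℤ) + (g : ZMod (2*g)), v.1 (-(N₂ : ℤ)) - (g : ZMod (2*g))} := by
      intro c _
      rcases eq_or_ne c (u.1 (N₁ : ℤ) + (g : ZMod (2*g))) with hc | hc
      · simp [hc]
      · have := h c hc
        have : c = v.1 (-(N₂ : ℤ)) - (g : ZMod (2*g)) := by
          rw [this]; ring
        simp [this]
    have hcard := Finset.card_le_card hsub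
    have h1 : (Finset.univ : Finset (ZMod (2*g))).card = 2 * g := by
      simp [ZMod.card]
    have h2 : ({u.1 (N₁ : ℤ) + (g : ZMod (2*g)), v.1 (-(N₂ : ℤ)) - (g : ZMod (2*g))} :
        Finset (ZMod (2*g))).card ≤ 2 := Finset.card_insert_le _ _ |>.trans (by simp)
    omega
  -- construct the spliced sequence
  set z0 : ℤ → ZMod (2*g) := fun i =>
    if i ≤ (N₁ : ℤ) then u.1 i else if i = (N₁ : ℤ) + 1 then c else v.1 (i - K) with hz0
  have hred : ∀ i : ℤ, z0 (i + 1) ≠ z0 i + (g : ZMod (2*g)) := by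
    intro i
    rcases lt_trichotomy i (N₁ : ℤ) with hi | hi | hi
    · have h1 : i + 1 ≤ (N₁ : ℤ) := by omega
      have h2 : i ≤ (N₁ : ℤ) := by omega
      simp only [hz0, if_pos h1, if_pos h2]
      exact u.2 i
    · have h1 : ¬ (i + 1 ≤ (N₁ : ℤ)) := by omega
      have h2 : i + 1 = (N₁ : ℤ) + 1 := by omega
      subst hi
      have e1 : z0 ((N₁ : ℤ) + 1) = c := by simp [hz0, h1]
      have e2 : z0 (N₁ : ℤ) = u.1 (N₁ : ℤ) := by simp [hz0]
      rw [e1, e2]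
      exact hc1
    · rcases eq_or_ne i ((N₁ : ℤ) + 1) with h | h
      · have h1 : ¬ (i + 1 ≤ (N₁ : ℤ)) := by omega
        have h2 : i + 1 ≠ (N₁ : ℤ) + 1 := by omega
        have h3 : ¬ (i ≤ (N₁ : ℤ)) := by omega
        simp only [hz0]
        rw [if_neg h1, if_neg h2, if_neg h3, if_pos h]
        have h4 : i + 1 - (K : ℤ) = -(N₂ : ℤ) := by simp only [hK] at *; push_cast; omega
        rw [h4]
        exact hc2
      · have h1 : ¬ (i + 1 ≤ (N₁ : ℤ)) := by omega
        have h2 : i + 1 ≠ (N₁ : ℤ) + 1 := by omega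
        have h3 : ¬ (i ≤ (N₁ : ℤ)) := by omega
        simp only [hz0]
        rw [if_neg h1, if_neg h2, if_neg h3, if_neg h]
        have h4 : i + 1 - (K : ℤ) = (i - K) + 1 := by ring
        rw [h4]
        exact v.2 (i - K)
  set z : ShiftSpace g := ⟨z0, hred⟩ with hz
  have h1 : f z = f u := by
    apply hI
    intro i hi
    have hb : i.natAbs ≤ N₁ := Finset.le_sup hi
    have : i ≤ (N₁ : ℤ) := by omega
    show z0 i = u.1 i
    simp only [hz0]
    rw [if_pos this]
  have h2 : f (ShiftSpace.shift^[K] z) = f v := by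
    apply hJ
    intro j hj
    have hb : j.natAbs ≤ N₂ := Finset.le_sup hj
    rw [shift_iterate_apply]
    have h3 : ¬ (j + (K : ℤ) ≤ (N₁ : ℤ)) := by simp only [hK] at *; push_cast; omega
    have h4 : j + (K : ℤ) ≠ (N₁ : ℤ) + 1 := by simp only [hK] at *; push_cast; omega
    show z0 (j + (K:ℤ)) = v.1 j
    simp only [hz0]
    rw [if_neg h3, if_neg h4]
    norm_num
  rw [← h1, ← h2, f_shift_iterate f hT]
end

section
/- (Proposition 4.14: the ranks of the groups K_N in the filtration of H_1(S_T, ℤ), stated precisely as the count of cyclically reduced words.) For all integers g ≥ 1 and n ≥ 1, the number of cyclically reduced words of length n, i.e. Fintype.card { w : ZMod n → ZMod (2*g) // ∀ i : ZMod n, w (i+1) ≠ w i + (g : ZMod (2*g)) }, equals (2g−1)^n + (2g−1) if n is even, and equals (2g−1)^n + 1 if n is odd. -/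
open Finset

variable {S : Type*} [AddCommGroup S] [Fintype S] [DecidableEq S]

/-- number of `x`-avoiding sequences of length `n` with sum `s`. -/
def Ncnt (x : S) (n : ℕ) (s : S) : ℕ :=
  Fintype.card {d : Fin n → S // (∀ i, d i ≠ x) ∧ ∑ i, d i = s}

lemma Ncnt_zero (x s : S) : Ncnt x 0 s = if s = 0 then 1 else 0 := by
  rcases eq_or_ne s 0 with rfl | h
  · rw [if_pos rfl, Ncnt, Fintype.card_eq_one_iff]
    exact ⟨⟨fun i => i.elim0, fun i => i.elim0, by simp⟩,
      fun y => Subtype.ext (funext fun i => i.elim0)⟩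
  · rw [if_neg h, Ncnt, Fintype.card_eq_zero_iff]
    exact ⟨fun ⟨d, _, hs⟩ => h (by simpa using hs.symm)⟩

lemma Ncnt_rec (x : S) (n : ℕ) (s : S) :
    Ncnt x (n + 1) s + Ncnt x n (s - x) = (Fintype.card S - 1) ^ n := by
  classical
  have e1 : {d : Fin (n+1) → S // (∀ i, d i ≠ x) ∧ ∑ i, d i = s} ≃
      {e : Fin n → S // (∀ i, e i ≠ x) ∧ ∑ i, e i ≠ s - x} := by
    refine ⟨fun d => ⟨Fin.tail d.1, fun i => d.2.1 i.succ, ?_⟩,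
           fun e => ⟨Fin.cons (s - ∑ i, e.1 i) e.1, ⟨?_, ?_⟩⟩, ?_, ?_⟩
    · have hsum : d.1 0 + ∑ i, Fin.tail d.1 i = s := by
        have := d.2.2
        rw [Fin.sum_univ_succ] at this
        simpa [Fin.tail] using this
      intro hcon
      apply d.2.1 0
      rw [hcon] at hsum
      have : d.1 0 = x := by
        have := eq_sub_of_add_eq hsum
        simpa using this
      exact this
    · intro i
      refine Fin.cases ?_ ?_ i
      · simp only [Fin.cons_zero]
        intro hcon
        apply e.2.2
        rw [sub_eq_iff_eq_add] at hcon
        exact eq_sub_of_add_eq' hcon.symm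
      · intro j
        simp only [Fin.cons_succ]
        exact e.2.1 j
    · rw [Fin.sum_univ_succ]
      simp
    · intro d
      apply Subtype.ext
      have hsum : d.1 0 + ∑ i, Fin.tail d.1 i = s := by
        have := d.2.2
        rw [Fin.sum_univ_succ] at this
        simpa [Fin.tail] using this
      have h0 : d.1 0 = s - ∑ i, Fin.tail d.1 i := eq_sub_of_add_eq hsum
      conv_rhs => rw [← Fin.cons_self_tail d.1]
      rw [h0]
    · intro e
      apply Subtype.ext
      dsimp only
      exact Fin.tail_cons _ _
  rw [Ncnt, Fintype.card_congr e1, Ncnt]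
  rw [Fintype.card_subtype, Fintype.card_subtype]
  have hf : ∀ (q : (Fin n → S) → Prop) [DecidablePred q],
      (univ.filter fun e : Fin n → S => (∀ i, e i ≠ x) ∧ q e) =
      (univ.filter fun e : Fin n → S => (∀ i, e i ≠ x)).filter q := by
    intro q _
    rw [Finset.filter_filter]
  rw [hf, hf]
  simp only [ne_eq]
  rw [add_comm, Finset.card_filter_add_card_filter_not
    (fun e : Fin n → S => ∑ i, e i = s - x)]
  calc ((univ : Finset (Fin n → S)).filter fun e => ∀ i, ¬ e i = x).card
      = Fintype.card {e : Fin n → S // ∀ i, e i ≠ x} := (Fintype.card_subtype _).symm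
    _ = Fintype.card (∀ _i : Fin n, {a : S // ¬ a = x}) :=
        Fintype.card_congr (Equiv.subtypePiEquivPi (p := fun (_ : Fin n) (b : S) => ¬ b = x))
    _ = (Fintype.card S - 1) ^ n := by
        simp [Fintype.card_subtype_compl]


lemma aux_parity (m : ℕ) (a b : ℕ → ℕ) (ha0 : a 0 = 1) (hb0 : b 0 = 0)
    (hr1 : ∀ n, a (n + 1) + b n = m ^ n) (hr2 : ∀ n, b (n + 1) + a n = m ^ n) :
    ∀ n, (m + 1) * a n = m ^ n + (if Even n then m else 1) ∧
         (m + 1) * b n + (if Even n then 1 else m) = m ^ n := by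
  intro n
  induction n with
  | zero => simp [ha0, hb0, Nat.add_comm]
  | succ n ih =>
    obtain ⟨ih1, ih2⟩ := ih
    have h1 := hr1 n
    have h2 := hr2 n
    have hp : (m : ℤ) ^ (n + 1) = m * m ^ n := by ring
    rcases Nat.even_or_odd n with he | ho
    · rw [if_pos he] at ih1 ih2
      rw [if_neg (by simp [Nat.even_add_one, he])]
      rw [if_neg (by simp [Nat.even_add_one, he])]
      constructor <;> zify at h1 h2 ih1 ih2 ⊢
      · linear_combination (m + 1 : ℤ) * h1 - ih2 - hp
      · linear_combination (m + 1 : ℤ) * h2 - ih1 - hp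
    · rw [if_neg (by simp [Nat.not_even_iff_odd.mpr ho])] at ih1 ih2
      rw [if_pos (by simp [Nat.even_add_one, Nat.not_even_iff_odd.mpr ho])]
      rw [if_pos (by simp [Nat.even_add_one, Nat.not_even_iff_odd.mpr ho])]
      constructor <;> zify at h1 h2 ih1 ih2 ⊢
      · linear_combination (m + 1 : ℤ) * h1 - ih2 - hp
      · linear_combination (m + 1 : ℤ) * h2 - ih1 - hp

lemma card_cyclic (n : ℕ) [NeZero n] (x : S) :
    Fintype.card {w : ZMod n → S // ∀ i : ZMod n, w (i + 1) ≠ w i + x} =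
      Fintype.card S * Ncnt x n 0 := by
  classical
  have npos : 0 < n := Nat.pos_of_ne_zero (NeZero.ne n)
  set c : Fin n → ZMod n := fun i => ((i : ℕ) : ZMod n) with hc
  have hcval : ∀ i : Fin n, (c i).val = (i : ℕ) := fun i => ZMod.val_cast_of_lt i.isLt
  have hb : Function.Bijective c := by
    constructor
    · intro i j h
      have : (c i).val = (c j).val := by rw [h]
      rw [hcval, hcval] at this
      exact Fin.ext this
    · intro j
      exact ⟨⟨j.val, ZMod.val_lt j⟩, ZMod.natCast_rightInverse j⟩
  -- the forward map
  have hprop : ∀ w : {w : ZMod n → S // ∀ i : ZMod n, w (i + 1) ≠ w i + x},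
      (∀ i : Fin n, (w.1 (c i + 1) - w.1 (c i)) ≠ x) ∧
        ∑ i : Fin n, (w.1 (c i + 1) - w.1 (c i)) = (0 : S) := by
    intro w
    constructor
    · intro i h
      exact w.2 (c i) ((sub_eq_iff_eq_add.mp h).trans (add_comm _ _))
    · have h1 : ∑ i : Fin n, (w.1 (c i + 1) - w.1 (c i)) =
          ∑ j : ZMod n, (w.1 (j + 1) - w.1 j) :=
        Fintype.sum_bijective c hb _ _ (fun i => rfl)
      have h2 : ∑ j : ZMod n, w.1 (j + 1) = ∑ j : ZMod n, w.1 j := by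
        have := Equiv.sum_comp (Equiv.addRight (1 : ZMod n)) w.1
        simpa using this
      rw [h1, Finset.sum_sub_distrib, h2, sub_self]
  set Φ : {w : ZMod n → S // ∀ i : ZMod n, w (i + 1) ≠ w i + x} →
      S × {d : Fin n → S // (∀ i, d i ≠ x) ∧ ∑ i, d i = (0 : S)} :=
    fun w => ⟨w.1 0, ⟨fun i => w.1 (c i + 1) - w.1 (c i), (hprop w).1, (hprop w).2⟩⟩ with hΦ
  have hbij : Function.Bijective Φ := by
    constructor
    · rintro w w' h
      rw [hΦ] at h
      simp only [Prod.mk.injEq, Subtype.mk.injEq] at h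
      obtain ⟨h1, h2⟩ := h
      have key : ∀ k : ℕ, w.1 ((k : ℕ) : ZMod n) = w'.1 ((k : ℕ) : ZMod n) := by
        intro k
        induction k with
        | zero => simpa using h1
        | succ k ih =>
          have hk : c ⟨k % n, Nat.mod_lt _ npos⟩ = ((k : ℕ) : ZMod n) := by
            rw [hc]
            exact ZMod.natCast_mod k n
          have := congrFun h2 ⟨k % n, Nat.mod_lt _ npos⟩
          rw [hk] at this
          have hcast : ((k + 1 : ℕ) : ZMod n) = ((k : ℕ) : ZMod n) + 1 := by push_cast; ring
          rw [hcast]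
          have := sub_eq_sub_iff_add_eq_add.mp this
          -- this : w (↑k+1) + w' ↑k = w' (↑k+1) + w ↑k
          have goal : w.1 (((k : ℕ) : ZMod n) + 1) = w'.1 (((k : ℕ) : ZMod n) + 1) := by
            have h3 := this
            rw [ih] at h3
            exact add_right_cancel h3
          exact goal
      apply Subtype.ext
      funext i
      have := key i.val
      rwa [ZMod.natCast_rightInverse i] at this
    · rintro ⟨a, d, hd1, hd2⟩
      set e : ℕ → S := fun j => d ⟨j % n, Nat.mod_lt _ npos⟩ with he
      have heval : ∀ i : Fin n, e (i : ℕ) = d i := by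
        intro i
        have hfin : (⟨(i : ℕ) % n, Nat.mod_lt _ npos⟩ : Fin n) = i :=
          Fin.ext (Nat.mod_eq_of_lt i.isLt)
        rw [he]
        exact congrArg d hfin
      have hesum : ∑ j ∈ Finset.range n, e j = 0 := by
        rw [← Fin.sum_univ_eq_sum_range e n]
        rw [show ∑ i : Fin n, e (i : ℕ) = ∑ i : Fin n, d i from
          Finset.sum_congr rfl fun i _ => heval i]
        exact hd2
      set w : ZMod n → S := fun i => a + ∑ j ∈ Finset.range i.val, e j with hw
      have hw0 : w 0 = a := by rw [hw]; simp [ZMod.val_zero]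
      have key : ∀ i : ZMod n, w (i + 1) = w i + e i.val := by
        intro i
        have hi : i.val < n := ZMod.val_lt i
        have hir : i = ((i.val : ℕ) : ZMod n) := (ZMod.natCast_rightInverse i).symm
        rcases eq_or_lt_of_le (Nat.succ_le_of_lt hi) with hcase | hcase
        · -- i.val + 1 = n : wrap around
          have hcase' : i.val + 1 = n := hcase
          have h10 : i + 1 = 0 := by
            conv_lhs => rw [hir]
            rw [← Nat.cast_one, ← Nat.cast_add, hcase', ZMod.natCast_self]
          rw [h10, hw0]
          show a = (a + ∑ j ∈ Finset.range i.val, e j) + e i.val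
          rw [add_assoc, ← Finset.sum_range_succ, hcase', hesum, add_zero]
        · -- no wrap
          have hcase' : i.val + 1 < n := hcase
          have h10 : (i + 1).val = i.val + 1 := by
            conv_lhs => rw [hir]
            rw [← Nat.cast_one, ← Nat.cast_add, ZMod.val_cast_of_lt hcase']
          show a + ∑ j ∈ Finset.range (i + 1).val, e j =
            (a + ∑ j ∈ Finset.range i.val, e j) + e i.val
          rw [h10, Finset.sum_range_succ, add_assoc]
      refine ⟨⟨w, ?_⟩, ?_⟩
      · intro i hcon
        rw [key i] at hcon
        have : e i.val = x := add_left_cancel hcon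
        exact hd1 _ this
      · rw [hΦ]
        refine Prod.ext ?_ ?_
        · exact hw0
        · apply Subtype.ext
          funext i
          show w (c i + 1) - w (c i) = d i
          rw [key (c i), hcval i, add_sub_cancel_left, heval i]
  rw [Fintype.card_of_bijective hbij, Fintype.card_prod, Ncnt]


/-- Proposition 4.14: the rank of the term `K_N` of the filtration of `H_1(S_T, ℤ)`,
i.e. the number of cyclically reduced words of length `n` over the `2g` symbols (encoded as
`ZMod (2g)`, the inverse of a symbol `a` being `a + g`), equals `(2g−1)^n + (2g−1)` if `n`
is even and `(2g−1)^n + 1` if `n` is odd. -/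
theorem card_cyclically_reduced_words (g n : ℕ) (hg : 1 ≤ g) (hn : 1 ≤ n) :
    haveI : NeZero (2 * g) := ⟨by omega⟩
    haveI : NeZero n := ⟨by omega⟩
    Fintype.card { w : ZMod n → ZMod (2 * g) //
        ∀ i : ZMod n, w (i + 1) ≠ w i + (g : ZMod (2 * g)) } =
      if Even n then (2 * g - 1) ^ n + (2 * g - 1) else (2 * g - 1) ^ n + 1 := by
  haveI : NeZero (2 * g) := ⟨by omega⟩
  haveI : NeZero n := ⟨by omega⟩
  have hgg : (g : ZMod (2 * g)) + g = 0 := by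
    rw [← Nat.cast_add, ← two_mul, ZMod.natCast_self]
  have hneg : (0 : ZMod (2 * g)) - g = g := by
    rw [zero_sub, neg_eq_of_add_eq_zero_left hgg]
  have hx : (g : ZMod (2 * g)) ≠ 0 := by
    intro h0
    rw [ZMod.natCast_eq_zero_iff] at h0
    have := Nat.le_of_dvd (by omega) h0
    omega
  set m := 2 * g - 1 with hm
  have hcard : Fintype.card (ZMod (2 * g)) - 1 = m := by rw [ZMod.card]
  set a : ℕ → ℕ := fun k => Ncnt (g : ZMod (2 * g)) k 0 with ha
  set b : ℕ → ℕ := fun k => Ncnt (g : ZMod (2 * g)) k (g : ZMod (2 * g)) with hb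
  have hr1 : ∀ k, a (k + 1) + b k = m ^ k := by
    intro k
    have h := Ncnt_rec (g : ZMod (2 * g)) k (0 : ZMod (2 * g))
    rw [hneg, hcard] at h
    exact h
  have hr2 : ∀ k, b (k + 1) + a k = m ^ k := by
    intro k
    have h := Ncnt_rec (g : ZMod (2 * g)) k (g : ZMod (2 * g))
    rw [sub_self, hcard] at h
    exact h
  have ha0 : a 0 = 1 := by
    show Ncnt (g : ZMod (2 * g)) 0 (0 : ZMod (2 * g)) = 1
    rw [Ncnt_zero, if_pos rfl]
  have hb0 : b 0 = 0 := by
    show Ncnt (g : ZMod (2 * g)) 0 (g : ZMod (2 * g)) = 0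
    rw [Ncnt_zero, if_neg hx]
  have main := (aux_parity m a b ha0 hb0 hr1 hr2 n).1
  rw [card_cyclic n (g : ZMod (2 * g)), ZMod.card]
  rw [show Ncnt (g : ZMod (2 * g)) n 0 = a n from rfl]
  rw [show 2 * g = m + 1 by omega, main]
  split_ifs <;> rfl
end

section
/- (Lemma 4.8, key combinatorial step in the coding of primitive closed geodesics: two cyclically reduced words representing conjugate elements of a free group are cyclic rotations of one another.) Let α be a type with decidable equality, and let L₁, L₂ : List (α × Bool) be words that are reduced (containing no two adjacent entries of the form (x, b), (x, !b)) and cyclically reduced (if nonempty, the pair consisting of the last entry followed by the first entry is not of the form (x, b), (x, !b)). If the elements FreeGroup.mk L₁ and FreeGroup.mk L₂ of the free group FreeGroup α are conjugate (IsConj (FreeGroup.mk L₁) (FreeGroup.mk L₂)), then L₂ is a cyclic rotation of L₁: there exists k such that L₂ = L₁.rotate k. -/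
/-- A word `L : List (α × Bool)` is reduced if it contains no two adjacent entries of the
form `(x, b), (x, !b)`. -/
def IsReducedWord {α : Type*} (L : List (α × Bool)) : Prop :=
  List.Chain' (fun a b => ¬(a.1 = b.1 ∧ b.2 = !a.2)) L

/-- A word `L : List (α × Bool)` is cyclically reduced if (when nonempty) the pair consisting
of the last entry followed by the first entry is not of the form `(x, b), (x, !b)`. -/
def IsCyclicallyReducedWord {α : Type*} (L : List (α × Bool)) : Prop :=
  ∀ a b, L.getLast? = some a → L.head? = some b → ¬(a.1 = b.1 ∧ b.2 = !a.2)

/-!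
Every conjugate `g u g⁻¹` of a nonempty cyclically reduced word `u` has a reduced representative
`s ++ v ++ invRev s` with `v` a rotation of `u`. This is proved by induction on the length of `g`:
conjugating such a word by a letter `a` either cancels `a` against the head of `s`, or, when `s`
is empty, against the first or the last letter of `v`, which rotates `v`; if nothing cancels, `a`
is absorbed into `s`. A reduced word of this shape is cyclically reduced only if `s` is empty, and
reduced words representing the same element are equal.
-/

section

variable {α : Type*} {L : List (α × Bool)}

theorem isReducedWord_iff_isReduced : IsReducedWord L ↔ FreeGroup.IsReduced L := by
  unfold IsReducedWord FreeGroup.IsReduced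
  congr! 3 with a b
  cases a.2 <;> cases b.2 <;> simp

theorem IsReducedWord.isCyclicallyReduced (h : IsReducedWord L)
    (hc : IsCyclicallyReducedWord L) : FreeGroup.IsCyclicallyReduced L := by
  refine ⟨isReducedWord_iff_isReduced.mp h, fun a ha b hb hab => ?_⟩
  by_contra hne
  exact hc a b ha hb ⟨hab, by revert hne; cases a.2 <;> cases b.2 <;> simp⟩

end

namespace FreeGroup

variable {α : Type*} {L : List (α × Bool)} {a b : α × Bool}

theorem not_isReduced_pair_iff : ¬ IsReduced [a, b] ↔ b = (a.1, !a.2) := by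
  obtain ⟨x, s⟩ := a; obtain ⟨y, t⟩ := b
  cases s <;> cases t <;> simp [eq_comm]

theorem mk_singleton_not_eq_inv : mk [(a.1, !a.2)] = (mk [a])⁻¹ := by
  simp [invRev]

theorem isCyclicallyReduced_iff_cycleChain :
    IsCyclicallyReduced L ↔
      Cycle.Chain (fun a b : α × Bool => a.1 = b.1 → a.2 = b.2) (L : Cycle (α × Bool)) := by
  cases L with
  | nil => simp
  | cons a l =>
    rw [Cycle.chain_coe_cons, ← List.cons_append, IsCyclicallyReduced, IsReduced,
      List.isChain_append]
    simp

theorem IsCyclicallyReduced.of_isRotated {L' : List (α × Bool)} (h : IsCyclicallyReduced L)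
    (hL : L ~r L') : IsCyclicallyReduced L' := by
  rwa [isCyclicallyReduced_iff_cycleChain, ← Cycle.coe_eq_coe.mpr hL,
    ← isCyclicallyReduced_iff_cycleChain]

theorem IsReduced.eq_of_mk_eq {L₁ L₂ : List (α × Bool)} (h₁ : IsReduced L₁)
    (h₂ : IsReduced L₂) (h : mk L₁ = mk L₂) : L₁ = L₂ := by
  obtain ⟨L, h₁L, h₂L⟩ := Red.exact.mp h
  exact (h₁.red_iff_eq.mp h₁L).symm.trans (h₂.red_iff_eq.mp h₂L)

theorem eq_nil_of_isCyclicallyReduced_append_invRev {s v : List (α × Bool)}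
    (h : IsCyclicallyReduced (s ++ v ++ invRev s)) : s = [] := by
  cases s with
  | nil => rfl
  | cons p s =>
    have hlast : (p :: s ++ v ++ invRev (p :: s)).getLast? = some (p.1, !p.2) := by
      rw [invRev_cons, ← List.append_assoc, List.getLast?_append_of_ne_nil _ (by simp [invRev])]
      simp [invRev]
    simpa using h.2 _ hlast p (by simp)

theorem mk_cons (a : α × Bool) (s : List (α × Bool)) : mk (a :: s) = mk [a] * mk s := by
  rw [mul_mk, List.singleton_append]

theorem mk_append_append_invRev (s v : List (α × Bool)) :
    mk (s ++ v ++ invRev s) = mk s * mk v * (mk s)⁻¹ := by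
  rw [inv_mk, mul_mk, mul_mk]

def HasConjRotationWord (u : List (α × Bool)) (x : FreeGroup α) : Prop :=
  ∃ s v, u ~r v ∧ IsReduced (s ++ v ++ invRev s) ∧ x = mk (s ++ v ++ invRev s)

variable {u v : List (α × Bool)} {x : FreeGroup α}

theorem HasConjRotationWord.of_isRotated (h : HasConjRotationWord v x) (huv : u ~r v) :
    HasConjRotationWord u x := by
  obtain ⟨s, w, hvw, hred, rfl⟩ := h
  exact ⟨s, w, huv.trans hvw, hred, rfl⟩

theorem hasConjRotationWord_mk (hu : IsReduced u) : HasConjRotationWord u (mk u) :=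
  ⟨[], u, .refl u, by simpa using hu, by simp⟩

theorem IsCyclicallyReduced.hasConjRotationWord_conj_letter (hv : IsCyclicallyReduced v)
    (hne : v ≠ []) (a : α × Bool) : HasConjRotationWord v (mk [a] * mk v * (mk [a])⁻¹) := by
  obtain ⟨w, l, rfl⟩ := (List.eq_nil_or_concat' v).resolve_left hne
  by_cases hla : l = a
  · subst hla
    refine ⟨[], l :: w, List.isRotated_concat l w, ?_, ?_⟩
    · simpa using (hv.of_isRotated (List.isRotated_concat l w)).isReduced
    · simp only [← mul_mk, List.nil_append, invRev_empty, List.append_nil, mk_cons l w]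
      group
  obtain ⟨x, t, hxt⟩ := List.exists_cons_of_ne_nil hne
  by_cases hax : IsReduced [a, x]
  · refine ⟨[a], w ++ [l], .refl _, ?_, by rw [mk_append_append_invRev]⟩
    refine IsReduced.append_overlap ?_ ?_ hne
    · rw [List.singleton_append, hxt, isReduced_cons_cons]
      exact ⟨(isReduced_cons_cons.mp hax).1, hxt ▸ hv.isReduced⟩
    · refine IsReduced.append_overlap hv.isReduced ?_ (List.cons_ne_nil l [])
      by_contra hred
      rw [invRev, List.map_singleton, List.reverse_singleton, List.singleton_append,
        not_isReduced_pair_iff, Prod.mk.injEq, Bool.not_inj_iff] at hred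
      exact hla (Prod.ext hred.1.symm hred.2.symm)
  · rw [not_isReduced_pair_iff] at hax
    subst hax
    rw [hxt] at hv ⊢
    refine ⟨[], t ++ [(a.1, !a.2)], (List.isRotated_concat _ t).symm, ?_, ?_⟩
    · simpa using (hv.of_isRotated (List.isRotated_concat _ t).symm).isReduced
    · simp only [List.nil_append, invRev_empty, List.append_nil, ← mul_mk, mk_cons _ t,
        mk_singleton_not_eq_inv]
      group

theorem HasConjRotationWord.conj_letter (hu : IsCyclicallyReduced u) (hne : u ≠ [])
    (h : HasConjRotationWord u x) (a : α × Bool) :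
    HasConjRotationWord u (mk [a] * x * (mk [a])⁻¹) := by
  obtain ⟨s, v, huv, hred, rfl⟩ := h
  cases s with
  | nil =>
    have hv : v ≠ [] := fun hv => hne (List.isRotated_nil_iff.mp (hv ▸ huv))
    simpa using ((hu.of_isRotated huv).hasConjRotationWord_conj_letter hv a).of_isRotated huv
  | cons p s =>
    by_cases hap : IsReduced [a, p]
    · refine ⟨a :: p :: s, v, huv, ?_, ?_⟩
      · have hpa : IsReduced (invRev [p] ++ invRev [a]) := by
          simpa [invRev, eq_comm] using hap
        rw [invRev_cons, ← List.append_assoc] at hred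
        have e : a :: p :: s ++ v ++ invRev (a :: p :: s) =
            [a] ++ (p :: s ++ v ++ invRev s ++ invRev [p]) ++ invRev [a] := by
          rw [invRev_cons (a := a), invRev_cons (a := p)]
          simp only [List.cons_append, List.append_assoc, List.nil_append]
        rw [e]
        refine IsReduced.append_overlap ?_ (hred.append_overlap hpa (by simp [invRev]))
          (by simp)
        rw [List.singleton_append]
        exact isReduced_cons_cons.mpr ⟨(isReduced_cons_cons.mp hap).1, hred⟩
      · simp only [mk_append_append_invRev, mk_cons a (p :: s)]
        group
    · rw [not_isReduced_pair_iff] at hap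
      subst hap
      have hinfix : s ++ v ++ invRev s <:+: (a.1, !a.2) :: s ++ v ++ invRev ((a.1, !a.2) :: s) :=
        ⟨[(a.1, !a.2)], invRev [(a.1, !a.2)], by
          rw [invRev_cons (L := s)]
          simp only [List.cons_append, List.nil_append, List.append_assoc]⟩
      refine ⟨s, v, huv, hred.infix hinfix, ?_⟩
      simp only [mk_append_append_invRev, mk_cons _ s, mk_singleton_not_eq_inv]
      group

theorem IsCyclicallyReduced.hasConjRotationWord_conj (hu : IsCyclicallyReduced u) (hne : u ≠ [])
    (g : FreeGroup α) : HasConjRotationWord u (g * mk u * g⁻¹) := by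
  obtain ⟨t, rfl⟩ : ∃ t, mk t = g := Quot.exists_rep g
  induction t with
  | nil => simpa [← one_eq_mk] using hasConjRotationWord_mk hu.isReduced
  | cons a t ih =>
    convert ih.conj_letter hu hne a using 1
    rw [mk_cons a t]
    group

end FreeGroup

theorem conj_cyclically_reduced_iff_rotate_general {α : Type*}
    (L₁ L₂ : List (α × Bool))
    (h₁ : IsReducedWord L₁) (h₁c : IsCyclicallyReducedWord L₁)
    (h₂ : IsReducedWord L₂) (h₂c : IsCyclicallyReducedWord L₂)
    (hconj : IsConj (FreeGroup.mk L₁) (FreeGroup.mk L₂)) :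
    ∃ k : ℕ, L₂ = L₁.rotate k := by
  obtain ⟨c, hc⟩ := isConj_iff.mp hconj
  have hcyc₁ := h₁.isCyclicallyReduced h₁c
  have hcyc₂ := h₂.isCyclicallyReduced h₂c
  rcases eq_or_ne L₁ [] with rfl | hne
  · refine ⟨0, hcyc₂.isReduced.eq_of_mk_eq FreeGroup.IsReduced.nil ?_⟩
    rw [List.rotate_nil, ← hc, ← FreeGroup.one_eq_mk]
    group
  · obtain ⟨s, v, ⟨k, rfl⟩, hred, hmk⟩ := hcyc₁.hasConjRotationWord_conj hne c
    obtain rfl := hcyc₂.isReduced.eq_of_mk_eq hred (hc ▸ hmk)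
    obtain rfl := FreeGroup.eq_nil_of_isCyclicallyReduced_append_invRev hcyc₂
    exact ⟨k, by simp⟩

/-- Lemma 4.8, key combinatorial step in the coding of primitive closed geodesics: two
cyclically reduced words representing conjugate elements of a free group are cyclic rotations
of one another. -/
theorem conj_cyclically_reduced_iff_rotate {α : Type*} [DecidableEq α]
    (L₁ L₂ : List (α × Bool))
    (h₁ : IsReducedWord L₁) (h₁c : IsCyclicallyReducedWord L₁)
    (h₂ : IsReducedWord L₂) (h₂c : IsCyclicallyReducedWord L₂)
    (hconj : IsConj (FreeGroup.mk L₁) (FreeGroup.mk L₂)) :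
    ∃ k : ℕ, L₂ = L₁.rotate k :=
  conj_cyclically_reduced_iff_rotate_general L₁ L₂ h₁ h₁c h₂ h₂c hconj
end
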